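/- For all integers s ≥ 1 and t ≥ 0, the composition c = (3^s, 2, 3^t, 2) of n = 3s+3t+4 (s parts equal to 3, a 2, t parts equal to 3, then a 2) satisfies P(c) = (2/5)·3^{−s−t}·(3s+3t+4)!, i.e. 5·3^{s+t}·P(c) = 2·(3s+3t+4)!. -/

import Mathlib

/-- `i` (1-based, with `1 < i < n`) is a peak of the permutation `σ` of `{1,…,n}`
(represented as a permutation of `Fin n`, position `j` (1-based) being index `j-1`). -/
def IsPeak {n : ℕ} (σ : Equiv.Perm (Fin n)) (i : ℕ) : Prop :=
  ∃ (h₂ : 2 ≤ i) (h₃ : i < n),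
    σ ⟨i - 2, by omega⟩ < σ ⟨i - 1, by omega⟩ ∧ σ ⟨i, h₃⟩ < σ ⟨i - 1, by omega⟩

open Classical in
/-- The peak set of a permutation of `{1,…,n}` (as a set of 1-based positions). -/
noncomputable def peakSet {n : ℕ} (σ : Equiv.Perm (Fin n)) : Finset ℕ :=
  (Finset.range n).filter (fun i => IsPeak σ i)

/-- `P(S;n)`: the number of permutations of `{1,…,n}` with peak set `S`. -/
noncomputable def numPeakSet (n : ℕ) (S : Finset ℕ) : ℕ :=
  Nat.card {σ : Equiv.Perm (Fin n) // peakSet σ = S}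

/-- `c` is a composition of `n`: a list of positive integers summing to `n`. -/
def IsComposition (n : ℕ) (c : List ℕ) : Prop :=
  (∀ x ∈ c, 0 < x) ∧ c.sum = n

/-- The set `S(c)` of proper partial sums of the composition `c`. -/
def compPeaks (c : List ℕ) : Finset ℕ :=
  (Finset.range (c.length - 1)).image (fun i => (c.take (i + 1)).sum)

/-- `P(c)`: the number of permutations of `{1,…,|c|}` whose peak set is `S(c)`. -/
noncomputable def Pcomp (c : List ℕ) : ℕ :=
  numPeakSet c.sum (compPeaks c)

/-- A composition is maximal if `P(b) ≤ P(c)` for every composition `b` of the same size. -/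
def IsMaximal (c : List ℕ) : Prop :=
  ∀ b : List ℕ, IsComposition c.sum b → Pcomp b ≤ Pcomp c

/-!
The Lehmer code `ρ j = #{i < j | σ i < σ j}` is a bijection from the permutations of `Fin n`
onto the sequences with `ρ j ≤ j`, and `σ` has a peak at `i` exactly when
`ρ (i - 2) < ρ (i - 1) ≥ ρ i`. For the composition `c` every position outside `S(c)` is next to
a position of `S(c)`, and two peaks are never adjacent, so "peak set `S(c)`" may be replaced by
"a peak at every position of `S(c)`", a conjunction of conditions on consecutive code entries.
Peak conditions on the first `m` entries do not involve the later ones, so appending entries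
multiplies the number of codes by a factor independent of the prefix: `m + 1` for one free
entry, `(m + 1)(m + 2)(m + 3) / 3` for three entries with a peak in the middle, and
`2 (m + 1) ⋯ (m + 5) / 15` for five entries with peaks at the second and fourth
(`2 / 15 = 16 / 5!` is the proportion of up-down-up-down orderings of five values).
Starting from one free entry, `S(c)` is built from `s - 1` three-entry blocks, one five-entry
block, `t` three-entry blocks and a final free entry.
-/

open Finset
open scoped Nat

section

variable {n : ℕ}

theorem IsPeak.not_isPeak_add_one {σ : Equiv.Perm (Fin n)} {i : ℕ} (h : IsPeak σ i) :
    ¬ IsPeak σ (i + 1) := by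
  obtain ⟨_, _, _, hdown⟩ := h
  rintro ⟨_, _, hup, _⟩
  have e : (⟨i + 1 - 2, by omega⟩ : Fin n) = ⟨i - 1, by omega⟩ :=
    Fin.ext (by simp only; omega)
  simp only [e, Nat.add_sub_cancel] at hup
  exact lt_asymm hup hdown

theorem peakSet_eq_iff_forall_isPeak {σ : Equiv.Perm (Fin n)} {P : Finset ℕ}
    (hdom : ∀ q, 2 ≤ q → q < n → q ∉ P → q - 1 ∈ P ∨ q + 1 ∈ P) :
    peakSet σ = P ↔ ∀ p ∈ P, IsPeak σ p := by
  classical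
  refine ⟨fun h p hp => (mem_filter.1 (h ▸ hp)).2, fun h => ?_⟩
  ext q
  simp only [peakSet, mem_filter, mem_range]
  refine ⟨fun ⟨_, hq⟩ => ?_, fun hq => ⟨(h q hq).2.1, h q hq⟩⟩
  by_contra hqP
  have ⟨h2, hlt, _⟩ := hq
  rcases hdom q h2 hlt hqP with hprev | hnext
  · exact (h _ hprev).not_isPeak_add_one (by rwa [Nat.sub_add_cancel (by omega)])
  · exact hq.not_isPeak_add_one (h _ hnext)

abbrev LehmerCode (n : ℕ) := ∀ j : Fin n, Fin (j + 1)

theorem card_lehmerCode : Fintype.card (LehmerCode n) = n ! := by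
  simp [Fintype.card_pi, Fin.prod_univ_eq_prod_range (fun j => j + 1),
    prod_range_add_one_eq_factorial]

def lehmerRank (σ : Equiv.Perm (Fin n)) (j : Fin n) : ℕ := #{i ∈ Iio j | σ i < σ j}

theorem lehmerRank_lt_succ (σ : Equiv.Perm (Fin n)) (j : Fin n) : lehmerRank σ j < j + 1 :=
  Nat.lt_succ_of_le <| (card_filter_le _ _).trans (Fin.card_Iio j).le

def lehmerCode (σ : Equiv.Perm (Fin n)) : LehmerCode n :=
  fun j => ⟨lehmerRank σ j, lehmerRank_lt_succ σ j⟩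

theorem lehmerRank_lt_lehmerRank {σ : Equiv.Perm (Fin n)} {j k : Fin n} (hjk : j < k)
    (h : σ j < σ k) : lehmerRank σ j < lehmerRank σ k := by
  refine card_lt_card ((ssubset_iff_of_subset fun i hi => ?_).2 ⟨j, ?_, ?_⟩)
  · simp only [mem_filter, mem_Iio] at hi ⊢
    exact ⟨hi.1.trans hjk, hi.2.trans h⟩
  · simpa using ⟨hjk, h⟩
  · simp

theorem lehmerRank_le_lehmerRank {σ : Equiv.Perm (Fin n)} {j k : Fin n} (hjk : (k : ℕ) = j + 1)
    (h : σ k < σ j) : lehmerRank σ k ≤ lehmerRank σ j := by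
  refine card_le_card fun i hi => ?_
  simp only [mem_filter, mem_Iio] at hi ⊢
  refine ⟨lt_of_le_of_ne (Fin.le_def.2 (by have := Fin.lt_def.1 hi.1; omega)) ?_, hi.2.trans h⟩
  rintro rfl
  exact lt_asymm hi.2 h

theorem lt_iff_lehmerRank_lt {σ : Equiv.Perm (Fin n)} {j k : Fin n} (hjk : (k : ℕ) = j + 1) :
    σ j < σ k ↔ lehmerRank σ j < lehmerRank σ k := by
  refine ⟨lehmerRank_lt_lehmerRank (Fin.lt_def.2 (by omega)), fun h => ?_⟩
  by_contra hle
  have hne : σ k ≠ σ j := σ.injective.ne (Fin.ne_of_val_ne (by omega))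
  exact (lehmerRank_le_lehmerRank hjk (lt_of_le_of_ne (not_lt.1 hle) hne)).not_gt h

theorem gt_iff_lehmerRank_le {σ : Equiv.Perm (Fin n)} {j k : Fin n} (hjk : (k : ℕ) = j + 1) :
    σ k < σ j ↔ lehmerRank σ k ≤ lehmerRank σ j := by
  rw [← not_le, (σ.injective.ne (Fin.ne_of_val_ne (by omega))).le_iff_lt,
    lt_iff_lehmerRank_lt hjk, not_lt]

theorem lehmerRank_eq_card_unused (σ : Equiv.Perm (Fin n)) (j : Fin n) :
    lehmerRank σ j = #{v ∈ Iio (σ j) | ∀ i, j < i → σ i ≠ v} := by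
  refine card_nbij σ (fun i hi => ?_) σ.injective.injOn (fun v hv => ?_)
  · simp only [coe_filter, mem_Iio, Set.mem_ofPred_eq] at hi ⊢
    exact ⟨hi.2, fun i' hi' e => (hi'.trans (σ.injective e ▸ hi.1)).false⟩
  · simp only [coe_filter, mem_Iio, Set.mem_ofPred_eq] at hv
    refine ⟨σ.symm v, ?_, σ.apply_symm_apply v⟩
    have hne : σ.symm v ≠ j := fun e => (e ▸ σ.apply_symm_apply v ▸ hv.1).false
    have hle : σ.symm v ≤ j := not_lt.1 fun hlt => hv.2 _ hlt (σ.apply_symm_apply v)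
    simpa using ⟨lt_of_le_of_ne hle hne, hv.1⟩

theorem lehmerRank_lt_lehmerRank_of_lt {σ τ : Equiv.Perm (Fin n)} {j : Fin n}
    (htail : ∀ i, j < i → σ i = τ i) (h : σ j < τ j) :
    lehmerRank σ j < lehmerRank τ j := by
  rw [lehmerRank_eq_card_unused, lehmerRank_eq_card_unused]
  refine card_lt_card ((ssubset_iff_of_subset fun v hv => ?_).2 ⟨σ j, ?_, ?_⟩)
  · simp only [mem_filter, mem_Iio] at hv ⊢
    exact ⟨hv.1.trans h, fun i hi => htail i hi ▸ hv.2 i hi⟩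
  · simp only [mem_filter, mem_Iio]
    exact ⟨h, fun i hi e => (σ.injective ((htail i hi).trans e) ▸ hi).false⟩
  · simp

theorem lehmerCode_injective : Function.Injective (lehmerCode (n := n)) := by
  intro σ τ h
  have hrank (j : Fin n) : lehmerRank σ j = lehmerRank τ j := congrArg Fin.val (congrFun h j)
  ext1 j
  induction j using WellFoundedGT.induction with
  | _ j ih =>
    rcases lt_trichotomy (σ j) (τ j) with hlt | heq | hgt
    · exact absurd (hrank j) (lehmerRank_lt_lehmerRank_of_lt ih hlt).ne
    · exact heq
    · exact absurd (hrank j) (lehmerRank_lt_lehmerRank_of_lt (fun i hi => (ih i hi).symm) hgt).ne'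

theorem lehmerCode_bijective : Function.Bijective (lehmerCode (n := n)) :=
  (Fintype.bijective_iff_injective_and_card _).2
    ⟨lehmerCode_injective, by rw [Fintype.card_perm, Fintype.card_fin, card_lehmerCode]⟩

namespace LehmerCode

def get (ρ : LehmerCode n) (j : ℕ) : ℕ := if h : j < n then ρ ⟨j, h⟩ else 0

def IsPeak (ρ : LehmerCode n) (i : ℕ) : Prop :=
  2 ≤ i ∧ i < n ∧ get ρ (i - 2) < get ρ (i - 1) ∧ get ρ i ≤ get ρ (i - 1)

instance (ρ : LehmerCode n) (i : ℕ) : Decidable (IsPeak ρ i) :=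
  inferInstanceAs (Decidable (_ ∧ _))

def snoc (ρ : LehmerCode n) (x : Fin (n + 1)) : LehmerCode (n + 1) :=
  Fin.snoc (α := fun j : Fin (n + 1) => Fin (j + 1)) ρ x

@[simp]
theorem get_snoc (ρ : LehmerCode n) (x : Fin (n + 1)) (j : ℕ) :
    get (snoc ρ x) j = if j < n then get ρ j else if j = n then x else 0 := by
  unfold get snoc
  split_ifs with h₁ h₂ h₃ <;> try omega
  · simp [Fin.snoc, h₂]
  · subst h₃; simp [Fin.snoc]

theorem isPeak_snoc_iff {ρ : LehmerCode n} {x : Fin (n + 1)} {p : ℕ} (hp : p < n) :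
    IsPeak (snoc ρ x) p ↔ IsPeak ρ p := by
  simp only [IsPeak, get_snoc, if_pos (show p - 2 < n by omega), if_pos (show p - 1 < n by omega),
    if_pos hp]
  omega

theorem sum_eq_sum_snoc {M : Type*} [AddCommMonoid M] (f : LehmerCode (n + 1) → M) :
    ∑ ρ, f ρ = ∑ x : Fin (n + 1), ∑ ρ : LehmerCode n, f (snoc ρ x) := by
  rw [← (Fin.snocEquiv fun j : Fin (n + 1) => Fin (j + 1)).sum_comp, Fintype.sum_prod_type]
  rfl

theorem forall_isPeak_snoc_iff {P : Finset ℕ} (hP : ∀ p ∈ P, p < n) {ρ : LehmerCode n}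
    {x : Fin (n + 1)} : (∀ p ∈ P, IsPeak (snoc ρ x) p) ↔ ∀ p ∈ P, IsPeak ρ p :=
  forall₂_congr fun p hp => isPeak_snoc_iff (hP p hp)

end LehmerCode

theorem get_lehmerCode (σ : Equiv.Perm (Fin n)) {j : ℕ} (hj : j < n) :
    (lehmerCode σ).get j = lehmerRank σ ⟨j, hj⟩ := dif_pos hj

theorem isPeak_iff_isPeak_lehmerCode {σ : Equiv.Perm (Fin n)} {i : ℕ} :
    IsPeak σ i ↔ (lehmerCode σ).IsPeak i := by
  by_cases hi : 2 ≤ i ∧ i < n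
  · obtain ⟨h2, hn⟩ := hi
    simp only [IsPeak, LehmerCode.IsPeak, h2, hn, exists_true_left, true_and,
      get_lehmerCode σ (show i - 2 < n by omega), get_lehmerCode σ (show i - 1 < n by omega),
      get_lehmerCode σ hn]
    rw [lt_iff_lehmerRank_lt (by simp only; omega), gt_iff_lehmerRank_le (by simp only; omega)]
  · exact iff_of_false (fun ⟨h2, hn, _⟩ => hi ⟨h2, hn⟩) (fun ⟨h2, hn, _⟩ => hi ⟨h2, hn⟩)

def numCodesWithPeaks (n : ℕ) (P : Finset ℕ) : ℕ :=
  #{ρ : LehmerCode n | ∀ p ∈ P, ρ.IsPeak p}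

theorem numPeakSet_eq_numCodesWithPeaks {P : Finset ℕ}
    (hdom : ∀ q, 2 ≤ q → q < n → q ∉ P → q - 1 ∈ P ∨ q + 1 ∈ P) :
    numPeakSet n P = numCodesWithPeaks n P := by
  rw [numPeakSet, numCodesWithPeaks, ← Fintype.card_subtype, ← Nat.card_eq_fintype_card]
  exact Nat.card_congr <| (Equiv.ofBijective _ lehmerCode_bijective).subtypeEquiv fun σ => by
    simp only [peakSet_eq_iff_forall_isPeak hdom, isPeak_iff_isPeak_lehmerCode,
      Equiv.ofBijective_apply]

theorem numCodesWithPeaks_succ {P : Finset ℕ} (hP : ∀ p ∈ P, p < n) :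
    numCodesWithPeaks (n + 1) P = (n + 1) * numCodesWithPeaks n P := by
  simp only [numCodesWithPeaks, card_filter, LehmerCode.sum_eq_sum_snoc,
    LehmerCode.forall_isPeak_snoc_iff hP, sum_const, card_univ, Fintype.card_fin, smul_eq_mul]

theorem numCodesWithPeaks_empty : numCodesWithPeaks n ∅ = n ! := by
  rw [← card_lehmerCode, numCodesWithPeaks, filter_true_of_mem (by simp), card_univ]

theorem boole_and {M : Type*} [MulZeroOneClass M] (p q : Prop) [Decidable p] [Decidable q] :
    (if p ∧ q then (1 : M) else 0) = (if p then 1 else 0) * (if q then 1 else 0) := by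
  rw [ite_zero_mul_ite_zero, mul_one]

theorem sum_boole_val_lt (k m : ℕ) :
    ∑ a : Fin k, (if (a : ℕ) < m then 1 else 0) = min k m := by
  rw [sum_boole, Nat.cast_id, Fin.card_filter_val_lt]

theorem sum_boole_val_le (k m : ℕ) :
    ∑ a : Fin k, (if (a : ℕ) ≤ m then 1 else 0) = min k (m + 1) := by
  simp only [← Nat.lt_add_one_iff, sum_boole_val_lt]

theorem three_mul_sum_range_mul_succ (m : ℕ) :
    3 * ∑ i ∈ range (m + 1), (i + 1) * i = m * (m + 1) * (m + 2) := by
  induction m with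
  | zero => simp
  | succ m ih => rw [sum_range_succ, mul_add, ih]; ring

theorem three_mul_sum_peak_indicator (n : ℕ) :
    3 * ∑ c : Fin (n + 3), ∑ b : Fin (n + 2), ∑ a : Fin (n + 1),
      (if (a : ℕ) < b ∧ (c : ℕ) ≤ b then 1 else 0) = (n + 1) * (n + 2) * (n + 3) := by
  have hb (b : Fin (n + 2)) : ∑ c : Fin (n + 3), ∑ a : Fin (n + 1),
      (if (a : ℕ) < b ∧ (c : ℕ) ≤ b then 1 else 0) = ((b : ℕ) + 1) * b := by
    simp only [boole_and, ← mul_sum, ← sum_mul, sum_boole_val_lt, sum_boole_val_le]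
    rw [min_eq_right (by omega), min_eq_right (by omega), mul_comm]
  rw [sum_comm, sum_congr rfl fun b _ => hb b, Fin.sum_univ_eq_sum_range (fun b => (b + 1) * b),
    three_mul_sum_range_mul_succ]

theorem sum_range_ite_le {M : Type*} [AddCommMonoid M] (f : ℕ → M) (c m : ℕ) :
    ∑ i ∈ range m, (if c ≤ i then f i else 0) = ∑ i ∈ Ico c m, f i := by
  rw [← sum_filter]
  congr 1
  ext i
  simp only [mem_filter, mem_range, mem_Ico]
  omega

theorem two_mul_sum_Ico_cast {a b : ℕ} (h : a ≤ b) :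
    2 * ∑ i ∈ Ico a b, (i : ℚ) = b * (b - 1) - a * (a - 1) := by
  induction b, h using Nat.le_induction with
  | base => simp
  | succ b hab ih => rw [sum_Ico_succ_top hab, mul_add, ih]; push_cast; ring

theorem fifteen_mul_sum_range (M : ℕ) (P Q : ℚ) :
    15 * ∑ c ∈ range M, (P - c * (c - 1)) * (Q - (c + 1) * (c + 2)) =
      15 * P * Q * M - P * (10 * M + 15 * M ^ 2 + 5 * M ^ 3) -
        Q * (10 * M - 15 * M ^ 2 + 5 * M ^ 3) + (12 * M - 15 * M ^ 3 + 3 * M ^ 5) := by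
  induction M with
  | zero => simp
  | succ M ih => rw [sum_range_succ, mul_add, ih]; push_cast; ring

theorem sum_peak_indicator_right_end (n c : ℕ) :
    ∑ b : Fin (n + 2), ∑ a : Fin (n + 1), (if (a : ℕ) < b ∧ c ≤ (b : ℕ) then 1 else 0) =
      ∑ b ∈ Ico c (n + 2), b := by
  simp only [boole_and, ← sum_mul, sum_boole_val_lt]
  rw [← sum_range_ite_le, ← Fin.sum_univ_eq_sum_range (fun b => if c ≤ b then b else 0)]
  refine sum_congr rfl fun b _ => ?_
  rw [min_eq_right (by omega), mul_boole]

theorem sum_peak_indicator_left_end (n c : ℕ) :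
    ∑ d : Fin (n + 4), ∑ e : Fin (n + 5), (if c < (d : ℕ) ∧ (e : ℕ) ≤ d then 1 else 0) =
      ∑ d ∈ Ico (c + 2) (n + 5), d := by
  simp only [boole_and, ← mul_sum, sum_boole_val_le]
  rw [← sum_Ico_add' (fun d => d) (c + 1) (n + 4) 1, ← sum_range_ite_le,
    ← Fin.sum_univ_eq_sum_range (fun d => if c + 1 ≤ d then d + 1 else 0)]
  refine sum_congr rfl fun d _ => ?_
  simp only [min_eq_right (by omega : (d : ℕ) + 1 ≤ n + 5), boole_mul, Nat.add_one_le_iff]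

theorem fifteen_mul_sum_two_peak_indicator (n : ℕ) :
    15 * ∑ e : Fin (n + 5), ∑ d : Fin (n + 4), ∑ c : Fin (n + 3), ∑ b : Fin (n + 2),
      ∑ a : Fin (n + 1),
        (if ((a : ℕ) < b ∧ (c : ℕ) ≤ b) ∧ ((c : ℕ) < d ∧ (e : ℕ) ≤ d) then 1 else 0) =
      2 * ((n + 1) * (n + 2) * (n + 3) * (n + 4) * (n + 5)) := by
  -- Once the shared entry `c` is fixed, the two peaks constrain disjoint sets of entries.
  simp only [boole_and (_ ∧ _), ← sum_mul]
  rw [sum_comm, sum_congr rfl fun d _ => sum_comm, sum_comm]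
  simp only [← mul_sum, sum_peak_indicator_right_end, sum_peak_indicator_left_end]
  rw [Fin.sum_univ_eq_sum_range
    (fun c => (∑ b ∈ Ico c (n + 2), b) * ∑ d ∈ Ico (c + 2) (n + 5), d)]
  have hterm : ∀ c ∈ range (n + 3),
      4 * (((∑ b ∈ Ico c (n + 2), b) * ∑ d ∈ Ico (c + 2) (n + 5), d : ℕ) : ℚ) =
        ((n + 1) * (n + 2) - c * (c - 1)) * ((n + 4) * (n + 5) - (c + 1) * (c + 2)) := by
    intro c hc
    rw [mem_range] at hc
    rw [Nat.cast_mul, Nat.cast_sum, Nat.cast_sum, show ∀ x y : ℚ, 4 * (x * y) = 2 * x * (2 * y)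
      by intros; ring, two_mul_sum_Ico_cast (by omega), two_mul_sum_Ico_cast (by omega)]
    push_cast
    ring
  have hsum := fifteen_mul_sum_range (n + 3) ((n + 1) * (n + 2)) ((n + 4) * (n + 5))
  rw [← sum_congr rfl hterm, ← mul_sum] at hsum
  qify
  push_cast at hsum ⊢
  linear_combination hsum / 4

theorem numCodesWithPeaks_add_three {P : Finset ℕ} (hP : ∀ p ∈ P, p < n) :
    3 * numCodesWithPeaks (n + 3) (insert (n + 2) P) =
      (n + 1) * (n + 2) * (n + 3) * numCodesWithPeaks n P := by
  have hsplit : numCodesWithPeaks (n + 3) (insert (n + 2) P) =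
      (∑ c : Fin (n + 3), ∑ b : Fin (n + 2), ∑ a : Fin (n + 1),
        if (a : ℕ) < b ∧ (c : ℕ) ≤ b then 1 else 0) * numCodesWithPeaks n P := by
    simp only [numCodesWithPeaks, card_filter, LehmerCode.sum_eq_sum_snoc, sum_mul]
    simp only [mul_sum, ite_zero_mul_ite_zero, one_mul]
    iterate 4 (apply Finset.sum_congr rfl; intro _ _)
    refine if_congr ?_ rfl rfl
    rw [forall_mem_insert, LehmerCode.forall_isPeak_snoc_iff fun p hp => (hP p hp).trans (by omega),
      LehmerCode.forall_isPeak_snoc_iff fun p hp => (hP p hp).trans (by omega),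
      LehmerCode.forall_isPeak_snoc_iff hP]
    simp [LehmerCode.IsPeak]
  rw [hsplit, ← mul_assoc, three_mul_sum_peak_indicator]

theorem numCodesWithPeaks_add_five {P : Finset ℕ} (hP : ∀ p ∈ P, p < n) :
    15 * numCodesWithPeaks (n + 5) (insert (n + 2) (insert (n + 4) P)) =
      2 * ((n + 1) * (n + 2) * (n + 3) * (n + 4) * (n + 5)) * numCodesWithPeaks n P := by
  have hsplit : numCodesWithPeaks (n + 5) (insert (n + 2) (insert (n + 4) P)) =
      (∑ e : Fin (n + 5), ∑ d : Fin (n + 4), ∑ c : Fin (n + 3), ∑ b : Fin (n + 2),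
        ∑ a : Fin (n + 1),
          if ((a : ℕ) < b ∧ (c : ℕ) ≤ b) ∧ ((c : ℕ) < d ∧ (e : ℕ) ≤ d) then 1 else 0) *
        numCodesWithPeaks n P := by
    simp only [numCodesWithPeaks, card_filter, LehmerCode.sum_eq_sum_snoc, sum_mul]
    simp only [mul_sum, ite_zero_mul_ite_zero, one_mul]
    iterate 6 (apply Finset.sum_congr rfl; intro _ _)
    refine if_congr ?_ rfl rfl
    rw [forall_mem_insert, forall_mem_insert]
    iterate 4 rw [LehmerCode.forall_isPeak_snoc_iff fun p hp => (hP p hp).trans (by omega)]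
    rw [LehmerCode.forall_isPeak_snoc_iff hP]
    simp [LehmerCode.IsPeak, and_assoc]
  rw [hsplit, ← mul_assoc, fifteen_mul_sum_two_peak_indicator]

def everyThird (n k : ℕ) : Finset ℕ := (range k).image fun i => n + 3 * i + 2

theorem mem_everyThird {k q : ℕ} :
    q ∈ everyThird n k ↔ n + 2 ≤ q ∧ q < n + 3 * k ∧ (q - n) % 3 = 2 := by
  simp only [everyThird, mem_image, mem_range]
  refine ⟨fun ⟨i, hi, hq⟩ => by omega, fun h => ⟨(q - n) / 3, by omega, by omega⟩⟩

theorem everyThird_succ (k : ℕ) :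
    everyThird n (k + 1) = insert (n + 3 * k + 2) (everyThird n k) := by
  rw [everyThird, range_add_one, image_insert, everyThird]

theorem numCodesWithPeaks_everyThird_union {P : Finset ℕ} (hP : ∀ p ∈ P, p < n) (k : ℕ) :
    n ! * 3 ^ k * numCodesWithPeaks (n + 3 * k) (everyThird n k ∪ P) =
      (n + 3 * k)! * numCodesWithPeaks n P := by
  induction k with
  | zero => simp [everyThird]
  | succ k ih =>
    have hbound : ∀ p ∈ everyThird n k ∪ P, p < n + 3 * k := by
      simp only [mem_union, mem_everyThird]
      exact fun p hp => hp.elim (fun h => h.2.1) fun h => (hP p h).trans_le (by omega)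
    have hfac : (n + 3 * k + 3)! =
        (n + 3 * k + 1) * (n + 3 * k + 2) * (n + 3 * k + 3) * (n + 3 * k)! := by
      simp only [Nat.factorial_succ]
      ring
    rw [everyThird_succ, insert_union, show n + 3 * (k + 1) = n + 3 * k + 3 by ring, hfac]
    linear_combination n ! * 3 ^ k * numCodesWithPeaks_add_three hbound +
      (n + 3 * k + 1) * (n + 3 * k + 2) * (n + 3 * k + 3) * ih

end

theorem sum_take_composition (s t i : ℕ) (hi : i ≤ s + t) :
    ((List.replicate s 3 ++ [2] ++ List.replicate t 3 ++ [2]).take (i + 1)).sum =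
      if i < s then 3 * i + 3 else 3 * i + 2 := by
  have take_two (m : ℕ) : (List.take m [2]).sum = min m 1 * 2 := by cases m <;> simp
  simp only [List.take_append, List.sum_append, List.take_replicate, List.sum_replicate,
    smul_eq_mul, List.length_append, List.length_replicate, List.length_cons, List.length_nil,
    take_two]
  split_ifs <;> omega

theorem compPeaks_composition (s t : ℕ) :
    compPeaks (List.replicate (s + 1) 3 ++ [2] ++ List.replicate t 3 ++ [2]) =
      everyThird (3 * s + 6) t ∪ insert (3 * s + 3) (insert (3 * s + 5) (everyThird 1 s)) := by
  ext q
  simp only [compPeaks, mem_image, mem_range, mem_union, mem_insert, mem_everyThird,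
    List.length_append, List.length_replicate, List.length_cons, List.length_nil]
  constructor
  · rintro ⟨i, hi, rfl⟩
    rw [sum_take_composition _ _ _ (by omega)]
    split_ifs <;> omega
  · intro hq
    refine ⟨(q - 2) / 3, by omega, ?_⟩
    rw [sum_take_composition _ _ _ (by omega)]
    split_ifs <;> omega

theorem sum_composition (s t : ℕ) :
    (List.replicate s 3 ++ [2] ++ List.replicate t 3 ++ [2]).sum = 3 * s + 3 * t + 4 := by
  simp only [List.sum_append, List.sum_replicate, smul_eq_mul, List.sum_singleton]
  ring

theorem five_mul_numCodesWithPeaks_composition (s t : ℕ) :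
    5 * 3 ^ (s + 1 + t) * numCodesWithPeaks (3 * s + 3 * t + 6)
        (everyThird (3 * s + 6) t ∪ insert (3 * s + 3) (insert (3 * s + 5) (everyThird 1 s))) =
      2 * (3 * s + 3 * t + 6)! := by
  have hprefix := numCodesWithPeaks_everyThird_union (n := 1) (P := ∅) (by simp) s
  rw [union_empty, numCodesWithPeaks_empty, Nat.factorial_one, one_mul, mul_one,
    add_comm 1] at hprefix
  have hpair := numCodesWithPeaks_add_five (n := 3 * s + 1) (P := everyThird 1 s)
    fun p hp => by have := mem_everyThird.1 hp; omega
  rw [show 3 * s + 1 + 5 = 3 * s + 6 by ring, show 3 * s + 1 + 2 = 3 * s + 3 by ring,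
    show 3 * s + 1 + 4 = 3 * s + 5 by ring] at hpair
  have hsuffix := numCodesWithPeaks_everyThird_union (n := 3 * s + 6)
    (P := insert (3 * s + 3) (insert (3 * s + 5) (everyThird 1 s)))
    (by simp only [mem_insert, mem_everyThird]; omega) t
  rw [show 3 * s + 6 + 3 * t = 3 * s + 3 * t + 6 by ring] at hsuffix
  have hfac : (3 * s + 2) * (3 * s + 3) * (3 * s + 4) * (3 * s + 5) * (3 * s + 6) * (3 * s + 1)! =
      (3 * s + 6)! := by
    simp only [Nat.factorial_succ]
    ring
  refine Nat.eq_of_mul_eq_mul_left (Nat.factorial_pos (3 * s + 6)) ?_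
  linear_combination 5 * 3 ^ (s + 1) * hsuffix + (3 * s + 3 * t + 6)! * 3 ^ s * hpair +
    2 * (3 * s + 3 * t + 6)! * (3 * s + 2) * (3 * s + 3) * (3 * s + 4) * (3 * s + 5) *
      (3 * s + 6) * hprefix + 2 * (3 * s + 3 * t + 6)! * hfac

theorem Pcomp_three_s_two_three_t_two (s t : ℕ) (hs : 1 ≤ s) :
    5 * 3 ^ (s + t) *
      Pcomp (List.replicate s 3 ++ [2] ++ List.replicate t 3 ++ [2])
    = 2 * Nat.factorial (3 * s + 3 * t + 4) := by
  obtain ⟨s, rfl⟩ := Nat.exists_eq_add_of_le' hs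
  rw [Pcomp, sum_composition, compPeaks_composition,
    show 3 * (s + 1) + 3 * t + 4 = 3 * s + 3 * t + 6 + 1 by ring,
    numPeakSet_eq_numCodesWithPeaks, numCodesWithPeaks_succ, Nat.factorial_succ, mul_left_comm 2,
    ← five_mul_numCodesWithPeaks_composition]
  · ring
  all_goals simp only [mem_union, mem_insert, mem_everyThird]; omega
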